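/- arXiv:2507.05762 — 4 statements merged into one kernel-verified Lean document; each statement's English description precedes it below -/
import Mathlib

section
/- The companion matrix of the polynomial x³ − x² − x − 1 over F₃ cannot be written as D + M with D diagonalizable and M² = 0. -/
/-!
Write `A = D + M` with `D` diagonalizable and `M² = 0`. The kernel of `M` contains its range, so
it has dimension at least `2`; it meets every eigenspace of `D` trivially, since a common vector
would be an eigenvector of `A`, and the characteristic polynomial of `A` has no root in `𝔽₃`.
Counting dimensions in `𝔽₃³`, every eigenvalue of `D` is simple, so the three eigenvalues of `D`
are `0, 1, 2` and `tr D = 0`. As `tr M = 0` too, this contradicts `tr A = 1`.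
-/

open Matrix

def IsDiagonalizable {F n : Type*} [Field F] [Fintype n] [DecidableEq n]
    (D : Matrix n n F) : Prop :=
  ∃ U : Matrix n n F, IsUnit U ∧ (U⁻¹ * D * U).IsDiag

open Module Module.End

section Endomorphism

variable {K V : Type*} [Field K] [AddCommGroup V] [Module K V]

theorem LinearMap.finrank_range_le_finrank_ker_of_mul_self_eq_zero [FiniteDimensional K V]
    {m : End K V} (hm : m * m = 0) :
    finrank K (LinearMap.range m) ≤ finrank K (LinearMap.ker m) :=
  Submodule.finrank_mono (LinearMap.range_le_ker_iff.mpr hm)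

theorem Module.End.eigenspace_inf_ker_eq_bot_of_not_hasEigenvalue_add {d m : End K V} {μ : K}
    (hμ : ¬ (d + m).HasEigenvalue μ) : eigenspace d μ ⊓ LinearMap.ker m = ⊥ := by
  rw [hasEigenvalue_iff, not_not] at hμ
  rw [eq_bot_iff, ← hμ]
  intro v hv
  obtain ⟨hd, hm⟩ := Submodule.mem_inf.mp hv
  rw [mem_eigenspace_iff] at hd ⊢
  rw [LinearMap.mem_ker] at hm
  simp [hd, hm]

theorem Module.End.two_mul_finrank_eigenspace_le [FiniteDimensional K V] {d m : End K V} {μ : K}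
    (hm : m * m = 0) (hμ : ¬ (d + m).HasEigenvalue μ) :
    2 * finrank K (eigenspace d μ) ≤ finrank K V := by
  have hsup := Submodule.finrank_sup_add_finrank_inf_eq (eigenspace d μ) (LinearMap.ker m)
  rw [eigenspace_inf_ker_eq_bot_of_not_hasEigenvalue_add hμ, finrank_bot] at hsup
  have := Submodule.finrank_le (eigenspace d μ ⊔ LinearMap.ker m)
  have := LinearMap.finrank_range_add_finrank_ker m
  have := LinearMap.finrank_range_le_finrank_ker_of_mul_self_eq_zero hm
  omega

end Endomorphism

section Diagonalizable

variable {K n : Type*} [Field K] [Fintype n] [DecidableEq n]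

theorem IsDiagonalizable.exists_mul_eq_mul_diagonal {D : Matrix n n K}
    (hD : IsDiagonalizable D) :
    ∃ U : Matrix n n K, ∃ d : n → K, IsUnit U ∧ D * U = U * diagonal d := by
  obtain ⟨U, hU, hdiag⟩ := hD
  refine ⟨U, (U⁻¹ * D * U).diag, hU, ?_⟩
  rw [hdiag.diagonal_diag, Matrix.mul_assoc,
    mul_nonsing_inv_cancel_left _ _ ((isUnit_iff_isUnit_det U).mp hU)]

variable {D U : Matrix n n K} {d : n → K}

theorem card_le_finrank_eigenspace_of_mul_eq_mul_diagonal (hU : IsUnit U)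
    (hDU : D * U = U * diagonal d) (μ : K) :
    Nat.card {k // d k = μ} ≤ finrank K (eigenspace (toLin' D) μ) := by
  have hmem (k : n) (hk : d k = μ) : U.col k ∈ eigenspace (toLin' D) μ := by
    subst hk
    rw [mem_eigenspace_iff, toLin'_apply, ← mulVec_single_one, mulVec_mulVec, hDU,
      ← mulVec_mulVec, mulVec_single_one, ← mulVec_smul]
    congr 1
    ext i
    by_cases h : i = k <;> simp [h]
  have hli : LinearIndependent K
      (fun k : {k // d k = μ} => (⟨U.col k, hmem k k.2⟩ : eigenspace (toLin' D) μ)) :=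
    LinearIndependent.of_comp (eigenspace (toLin' D) μ).subtype
      ((linearIndependent_cols_iff_isUnit.mpr hU).comp _ Subtype.val_injective)
  classical
  simpa [Nat.card_eq_fintype_card] using hli.fintype_card_le_finrank

theorem two_mul_card_le_of_mul_eq_mul_diagonal {M : Matrix n n K} (hU : IsUnit U)
    (hDU : D * U = U * diagonal d) (hM : M ^ 2 = 0) (μ : K)
    (hμ : ¬ HasEigenvalue (toLin' (D + M)) μ) :
    2 * Nat.card {k // d k = μ} ≤ Fintype.card n := by
  have hm : toLin' M * toLin' M = 0 := by
    rw [Module.End.mul_eq_comp, ← toLin'_mul, ← sq, hM, map_zero]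
  rw [map_add] at hμ
  have := two_mul_finrank_eigenspace_le hm hμ
  have := card_le_finrank_eigenspace_of_mul_eq_mul_diagonal hU hDU μ
  rw [finrank_fintype_fun_eq_card] at *
  omega

theorem trace_eq_sum_of_mul_eq_mul_diagonal (hU : IsUnit U) (hDU : D * U = U * diagonal d) :
    trace D = ∑ i, d i := by
  have hdet := (isUnit_iff_isUnit_det U).mp hU
  have hD : D = U * (diagonal d * U⁻¹) := by
    rw [← Matrix.mul_assoc, ← hDU, mul_nonsing_inv_cancel_right _ _ hdet]
  rw [hD, trace_mul_comm, Matrix.mul_assoc, nonsing_inv_mul _ hdet, Matrix.mul_one,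
    trace_diagonal]

end Diagonalizable

theorem FiniteField.sum_eq_zero_of_injective {K n : Type*} [Field K] [Fintype K] [Fintype n]
    (hK : 2 < Fintype.card K) (hn : Fintype.card n = Fintype.card K) {d : n → K}
    (hd : Function.Injective d) : ∑ i, d i = 0 := by
  let e := Equiv.ofBijective d ((Fintype.bijective_iff_injective_and_card d).mpr ⟨hd, hn⟩)
  calc ∑ i, d i = ∑ x : K, x := e.sum_comp id
    _ = 0 := by simpa using FiniteField.sum_pow_lt_card_sub_one K 1 (by omega)

theorem companion_not_hasEigenvalue (μ : ZMod 3) :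
    ¬ HasEigenvalue (toLin' !![0, 0, 1; 1, 0, 1; 0, 1, 1]) μ := by
  rw [hasEigenvalue_iff_isRoot_charpoly, charpoly_toLin', Polynomial.IsRoot, eval_charpoly,
    det_fin_three]
  fin_cases μ <;> decide

/-- The companion matrix of x³ - x² - x - 1 over 𝔽₃ is not a sum of a
diagonalizable matrix and a square-zero matrix. -/
theorem stmt_11 :
    ¬ ∃ D M : Matrix (Fin 3) (Fin 3) (ZMod 3),
        IsDiagonalizable D ∧ M ^ 2 = 0 ∧
        (!![0, 0, 1; 1, 0, 1; 0, 1, 1] : Matrix (Fin 3) (Fin 3) (ZMod 3)) = D + M := by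
  rintro ⟨D, M, hD, hM, hA⟩
  obtain ⟨U, d, hU, hDU⟩ := hD.exists_mul_eq_mul_diagonal
  have hd : Function.Injective d := by
    intro i j hij
    have hle := two_mul_card_le_of_mul_eq_mul_diagonal hU hDU hM (d i)
      (hA ▸ companion_not_hasEigenvalue (d i))
    rw [Fintype.card_fin] at hle
    have : Subsingleton {k // d k = d i} := Finite.card_le_one_iff_subsingleton.mp (by omega)
    exact congrArg Subtype.val
      (Subsingleton.elim (⟨i, rfl⟩ : {k // d k = d i}) ⟨j, hij.symm⟩)
  have htrD : trace D = 0 := (trace_eq_sum_of_mul_eq_mul_diagonal hU hDU).trans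
    (FiniteField.sum_eq_zero_of_injective (by simp) (by simp) hd)
  have htrM : trace M = 0 := (isNilpotent_trace_of_isNilpotent ⟨2, hM⟩).eq_zero
  have htrA := congrArg trace hA
  rw [trace_add, htrD, htrM, trace_fin_three] at htrA
  exact absurd htrA (by decide)
end

section
/- Let A, M ∈ Mₙ(F₃) satisfy A³ = A² + A + I, M² = 0, and (A + M)³ = A + M. Then, by expanding M((A+M)³ − (A+M))M, M A² M + M A M A M = 0. -/
open Matrix

/-- Step (1): over 𝔽₃, if A³ = A² + A + 1, M² = 0 and (A+M)³ = A+M, then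
M A² M + M A M A M = 0 (equivalently M·A·M·(A+I)·M = 0 type relation). -/
theorem stmt_14 {n : ℕ} (A M : Matrix (Fin n) (Fin n) (ZMod 3))
    (hA : A ^ 3 = A ^ 2 + A + 1) (hM : M ^ 2 = 0)
    (hD : (A + M) ^ 3 = A + M) :
    M * A ^ 2 * M + M * A * M * A * M = 0 := by
  have hM' : M * M = 0 := by rw [← pow_two]; exact hM
  have expand : (A + M) ^ 3 = A ^ 3 + A ^ 2 * M + A * M * A + A * (M * M)
      + M * A ^ 2 + M * A * M + (M * M) * A + M * (M * M) := by
    noncomm_ring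
  rw [expand, hM', hA] at hD
  have h := congrArg (fun X => M * X * M) hD
  simp only [mul_add, add_mul, mul_assoc, mul_one, one_mul, ← mul_assoc, hM', mul_zero,
    zero_mul, add_zero, zero_add] at h
  have hz : M * A ^ 2 * M * M = 0 := by rw [mul_assoc, hM', mul_zero]
  rw [hz, add_zero] at h
  -- h : M*A^2*M + M*A*M + M*A*M*A*M = M*A*M
  linear_combination (norm := noncomm_ring) h
end

section
/- Let A, M ∈ Mₙ(F₃) satisfy A³ = A² + A + I, M² = 0, and (A + M)³ = A + M. Then M A M A M A M = M A M + M A M A M. -/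
/-!
Sandwiching by `M` kills every word containing `MM`, so `M (A + M)ᵏ M` is a short sum of words
`M Aⁱ M Aʲ M ⋯`. Comparing `M (A + M)³ M = M (A + M) M` gives `M A² M = -M A M A M`, and comparing
`M (A + M)⁴ M = M (A + M)² M`, with `A⁴` reduced by `A³ = A² + A + 1`, gives the identity up to a
multiple of `3`, which vanishes over `𝔽₃`.
-/

section SquareZeroSandwich

variable {R : Type*} [Ring R] {A M : R}

theorem mul_mul_eq_zero_of_mul_self_eq_zero (hM : M * M = 0) (X : R) : M * (M * X) = 0 := by
  rw [← mul_assoc, hM, zero_mul]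

theorem mul_add_mul_of_mul_self_eq_zero (hM : M * M = 0) : M * (A + M) * M = M * A * M := by
  rw [mul_add, add_mul, hM, zero_mul, add_zero]

theorem mul_add_sq_mul_of_mul_self_eq_zero (hM : M * M = 0) :
    M * (A + M) ^ 2 * M = M * A ^ 2 * M := by
  simp only [pow_succ, pow_zero, one_mul, add_mul, mul_add, mul_assoc, hM,
    mul_mul_eq_zero_of_mul_self_eq_zero hM, mul_zero, add_zero]

theorem mul_add_pow_three_mul_of_mul_self_eq_zero (hM : M * M = 0) :
    M * (A + M) ^ 3 * M = M * A ^ 3 * M + M * A * M * A * M := by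
  simp only [pow_succ, pow_zero, one_mul, add_mul, mul_add, mul_assoc, hM,
    mul_mul_eq_zero_of_mul_self_eq_zero hM, mul_zero, add_zero]

theorem mul_add_pow_four_mul_of_mul_self_eq_zero (hM : M * M = 0) :
    M * (A + M) ^ 4 * M =
      M * A ^ 4 * M + M * A * M * A ^ 2 * M + M * A ^ 2 * M * A * M := by
  simp only [pow_succ, pow_zero, one_mul, add_mul, mul_add, mul_assoc, hM,
    mul_mul_eq_zero_of_mul_self_eq_zero hM, mul_zero, add_zero]

theorem mamamam_eq_mam_add_mamam (h3 : (3 : R) = 0) (hA : A ^ 3 = A ^ 2 + A + 1)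
    (hM : M * M = 0) (hAM : (A + M) ^ 3 = A + M) :
    M * A * M * A * M * A * M = M * A * M + M * A * M * A * M := by
  have hA3 : M * A ^ 3 * M = M * A ^ 2 * M + M * A * M := by
    rw [hA]
    simp only [add_mul, mul_add, mul_one, hM, add_zero]
  have hA4 : M * A ^ 4 * M = 2 * (M * A ^ 2 * M) + 2 * (M * A * M) :=
    calc M * A ^ 4 * M = M * A ^ 3 * (A * M) := by noncomm_ring
      _ = M * (A ^ 2 + A + 1) * (A * M) := by rw [hA]
      _ = M * A ^ 3 * M + M * A ^ 2 * M + M * A * M := by noncomm_ring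
      _ = 2 * (M * A ^ 2 * M) + 2 * (M * A * M) := by rw [hA3]; noncomm_ring
  have hA2 : M * A ^ 2 * M = -(M * A * M * A * M) := by
    have h := mul_add_pow_three_mul_of_mul_self_eq_zero (A := A) hM
    rw [hAM, mul_add_mul_of_mul_self_eq_zero hM, hA3] at h
    linear_combination (norm := noncomm_ring) -h
  have hA2_left : M * A * M * A ^ 2 * M = -(M * A * M * A * M * A * M) := by
    linear_combination (norm := noncomm_ring) M * A * hA2
  have hA2_right : M * A ^ 2 * M * A * M = -(M * A * M * A * M * A * M) := by
    linear_combination (norm := noncomm_ring) hA2 * (A * M)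
  have h4 := mul_add_pow_four_mul_of_mul_self_eq_zero (A := A) hM
  rw [show (A + M) ^ 4 = (A + M) ^ 2 by rw [pow_succ, hAM, sq],
    mul_add_sq_mul_of_mul_self_eq_zero hM, hA4, hA2_left, hA2_right] at h4
  linear_combination (norm := noncomm_ring)
    -h4 - hA2 + h3 * (M * A * M * A * M * A * M - M * A * M)

end SquareZeroSandwich

open Matrix

/-- Step (2): over 𝔽₃, if A³ = A² + A + I, M² = 0 and (A+M)³ = A+M, then
M A M A M A M = M A M + M A M A M. -/
theorem stmt_15 {n : ℕ} (A M : Matrix (Fin n) (Fin n) (ZMod 3))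
    (hA : A ^ 3 = A ^ 2 + A + 1) (hM : M ^ 2 = 0)
    (hD : (A + M) ^ 3 = A + M) :
    M * A * M * A * M * A * M = M * A * M + M * A * M * A * M := by
  have h3 : (3 : Matrix (Fin n) (Fin n) (ZMod 3)) = 0 := by
    have h := map_natCast (algebraMap (ZMod 3) (Matrix (Fin n) (Fin n) (ZMod 3))) 3
    rwa [ZMod.natCast_self, map_zero, Nat.cast_ofNat, eq_comm] at h
  exact mamamam_eq_mam_add_mamam h3 hA (by rwa [sq] at hM) hD
end

section
/- Let A, M ∈ Mₙ(F₃) satisfy A³ = A² + A + I, M² = 0, and (A + M)³ = A + M. Then M A M = 0 and M A² M = 0. -/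
/-!
Multiplying `(A + M)³ = A + M` on the left by `M` and using `M² = 0` and `A³ = A² + A + 1` gives
`M A² + M A² M + (M A)² = -M`. Multiplying this on the right by `M`, `A M` and `A² M` and writing
`x = M A`, one gets `M A² M = -x² M` and, in characteristic `3`, `x³ M = x M + x² M` and
`x⁴ M = x M - x² M + x³ M`. Over `𝔽₃` the polynomials `X³ - X² - X` and `X⁴ - X³ + X² - X`
have greatest common divisor `X`, so `x M = M A M = 0`, and then `M A² M = -x (x M) = 0`.
-/

section

variable {R : Type*} [Ring R]

theorem mul_eq_zero_of_pow_three_mul_of_pow_four_mul (h3 : (3 : R) = 0) {x v : R}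
    (h₃ : x ^ 3 * v = x * v + x ^ 2 * v) (h₄ : x ^ 4 * v = x * v - x ^ 2 * v + x ^ 3 * v) :
    x * v = 0 := by
  linear_combination (norm := noncomm_ring)
    h₃ - x * h₃ - x ^ 2 * h₃ + h₄ + x * h₄ - h3 * (x ^ 3 * v - x * v)

variable {A M : R}

theorem mul_sq_add_mul_sq_mul_add_mul_sq_eq_neg (hA : A ^ 3 = A ^ 2 + A + 1) (hM : M ^ 2 = 0)
    (hD : (A + M) ^ 3 = A + M) : M * A ^ 2 + M * A ^ 2 * M + (M * A) ^ 2 = -M := by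
  linear_combination (norm := noncomm_ring)
    M * hD - M * hA - M * A * hM - hM * A ^ 2 - hM * A * M - M * hM * A - hM * M ^ 2 + hM

theorem mul_sq_mul_eq_neg_mul_sq_mul (hM : M ^ 2 = 0)
    (hL : M * A ^ 2 + M * A ^ 2 * M + (M * A) ^ 2 = -M) :
    M * A ^ 2 * M = -((M * A) ^ 2 * M) := by
  linear_combination (norm := noncomm_ring) hL * M - hM - M * A ^ 2 * hM

theorem mul_pow_three_mul_eq (h3 : (3 : R) = 0) (hA : A ^ 3 = A ^ 2 + A + 1) (hM : M ^ 2 = 0)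
    (hL : M * A ^ 2 + M * A ^ 2 * M + (M * A) ^ 2 = -M)
    (ha : M * A ^ 2 * M = -((M * A) ^ 2 * M)) :
    (M * A) ^ 3 * M = M * A * M + (M * A) ^ 2 * M := by
  linear_combination (norm := noncomm_ring)
    hL * (A * M) - M * hA * M - ha * (A * M) - M * A * ha - ha - hM
      + h3 * ((M * A) ^ 3 * M - M * A * M)

theorem mul_pow_four_mul_eq (h3 : (3 : R) = 0) (hA : A ^ 3 = A ^ 2 + A + 1) (hM : M ^ 2 = 0)
    (hL : M * A ^ 2 + M * A ^ 2 * M + (M * A) ^ 2 = -M)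
    (ha : M * A ^ 2 * M = -((M * A) ^ 2 * M)) :
    (M * A) ^ 4 * M = M * A * M - (M * A) ^ 2 * M + (M * A) ^ 3 * M := by
  linear_combination (norm := noncomm_ring)
    hL * (A ^ 2 * M) - M * A * hA * M - M * hA * M - ha * (A ^ 2 * M) + (M * A) ^ 2 * ha
      - M * A * M * hA * M - M * A * ha - M * A * hM - hM - h3 * (M * A ^ 2 * M + M * A * M)

end

/-- Step (4): over 𝔽₃, if A³ = A² + A + I, M² = 0 and (A+M)³ = A+M, then
M A M = 0 and M A² M = 0. -/
theorem stmt_17 {n : ℕ} (A M : Matrix (Fin n) (Fin n) (ZMod 3))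
    (hA : A ^ 3 = A ^ 2 + A + 1) (hM : M ^ 2 = 0)
    (hD : (A + M) ^ 3 = A + M) :
    M * A * M = 0 ∧ M * A ^ 2 * M = 0 := by
  have h3 : (3 : Matrix (Fin n) (Fin n) (ZMod 3)) = 0 :=
    (map_ofNat (algebraMap (ZMod 3) _) 3).symm.trans (map_zero _)
  have hL := mul_sq_add_mul_sq_mul_add_mul_sq_eq_neg hA hM hD
  have ha := mul_sq_mul_eq_neg_mul_sq_mul hM hL
  have hMAM : M * A * M = 0 :=
    mul_eq_zero_of_pow_three_mul_of_pow_four_mul h3 (mul_pow_three_mul_eq h3 hA hM hL ha)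
      (mul_pow_four_mul_eq h3 hA hM hL ha)
  refine ⟨hMAM, ?_⟩
  rw [ha, sq, mul_assoc, hMAM, mul_zero, neg_zero]
end
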